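/- arXiv:math/0410482 — 8 statements merged into one kernel-verified Lean document; each statement's English description precedes it below -/
import Mathlib

section
/- Let φ be a unital linear functional on ℝ⟨x₁,…,xₙ⟩ such that ⟨P,Q⟩ := φ(P*Q) is a positive semidefinite bilinear form, and suppose a monic polynomial family {P_u} indexed by words u is orthogonal with respect to φ (φ(P_u* P_v) = 0 for u ≠ v, including u = ∅ so that φ(P_u) = 0 for all nonempty u). Then φ is uniquely determined: any two unital functionals for which the same monic family {P_u} is orthogonal coincide. -/
/-- The monomial `x_{u(1)} ⋯ x_{u(k)}` in the free algebra `ℝ⟨x₁,…,xₙ⟩`. -/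
noncomputable def mono {n : ℕ} (u : List (Fin n)) : FreeAlgebra ℝ (Fin n) :=
  (u.map (FreeAlgebra.ι ℝ)).prod

/-- The span of monomials of length (degree) `< k`: "lower-order terms". -/
noncomputable def lowerOrder (n k : ℕ) : Submodule ℝ (FreeAlgebra ℝ (Fin n)) :=
  Submodule.span ℝ {m | ∃ v : List (Fin n), v.length < k ∧ m = mono v}

/-- The monomial-reversing involution `*` on `ℝ⟨x₁,…,xₙ⟩`. -/
noncomputable def ncStar {n : ℕ} (P : FreeAlgebra ℝ (Fin n)) : FreeAlgebra ℝ (Fin n) :=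
  MulOpposite.unop
    (FreeAlgebra.lift ℝ (fun i => MulOpposite.op (FreeAlgebra.ι ℝ i)) P)

/-- A monic polynomial family: `P_∅ = 1` and `P_u = x_u + lower-order terms`. -/
def IsMonicFamily {n : ℕ} (P : List (Fin n) → FreeAlgebra ℝ (Fin n)) : Prop :=
  P [] = 1 ∧ ∀ u : List (Fin n), P u - mono u ∈ lowerOrder n u.length

/-! Being monic, the family `{P_u}` is unitriangular with respect to the monomials ordered by
length, so by induction on length every monomial, hence every polynomial, is a linear combination
of the `P_u`. A unital functional is therefore determined by its values on the `P_u`, and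
orthogonality against `P_∅ = 1` forces `φ (P_u) = 0` for every nonempty word `u`. -/

theorem span_range_mono (n : ℕ) :
    Submodule.span ℝ (Set.range (mono (n := n))) = ⊤ := by
  rw [eq_top_iff, ← Algebra.top_toSubmodule, ← FreeAlgebra.adjoin_range_ι,
    Algebra.adjoin_eq_span, Submodule.span_le]
  intro x hx
  obtain ⟨l, hl, rfl⟩ := Submonoid.exists_list_of_mem_closure hx
  obtain ⟨u, rfl⟩ : l ∈ Set.range (List.map (FreeAlgebra.ι ℝ)) := Set.range_list_map _ ▸ hl
  exact Submodule.subset_span ⟨u, rfl⟩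

namespace IsMonicFamily

variable {n : ℕ} {P : List (Fin n) → FreeAlgebra ℝ (Fin n)}

theorem mono_mem_span (hP : IsMonicFamily P) (u : List (Fin n)) :
    mono u ∈ Submodule.span ℝ (Set.range P) := by
  have hlower : P u - mono u ∈ Submodule.span ℝ (Set.range P) := by
    refine Submodule.span_le.2 ?_ (hP.2 u)
    rintro _ ⟨v, hv, rfl⟩
    exact hP.mono_mem_span v
  simpa using sub_mem (Submodule.subset_span (Set.mem_range_self u)) hlower
termination_by u.length

theorem span_range_eq_top (hP : IsMonicFamily P) : Submodule.span ℝ (Set.range P) = ⊤ :=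
  eq_top_iff.2 <| (span_range_mono n).symm.le.trans <|
    Submodule.span_le.2 <| Set.range_subset_iff.2 hP.mono_mem_span

theorem map_eq_zero_of_orthogonal (hP : IsMonicFamily P) {χ : FreeAlgebra ℝ (Fin n) →ₗ[ℝ] ℝ}
    (hχ : ∀ u v : List (Fin n), u ≠ v → χ (ncStar (P u) * P v) = 0)
    {u : List (Fin n)} (hu : u ≠ []) : χ (P u) = 0 := by
  simpa [hP.1, ncStar] using hχ [] u hu.symm

end IsMonicFamily

theorem state_of_orthogonality_unique_general (n : ℕ)
    (P : List (Fin n) → FreeAlgebra ℝ (Fin n)) (hP : IsMonicFamily P)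
    (φ ψ : FreeAlgebra ℝ (Fin n) →ₗ[ℝ] ℝ)
    (hφ1 : φ 1 = 1) (hψ1 : ψ 1 = 1)
    (hφorth : ∀ u v : List (Fin n), u ≠ v → φ (ncStar (P u) * P v) = 0)
    (hψorth : ∀ u v : List (Fin n), u ≠ v → ψ (ncStar (P u) * P v) = 0) :
    φ = ψ := by
  refine LinearMap.ext_on_range hP.span_range_eq_top fun u => ?_
  rcases eq_or_ne u [] with rfl | hu
  · rw [hP.1, hφ1, hψ1]
  · rw [hP.map_eq_zero_of_orthogonal hφorth hu, hP.map_eq_zero_of_orthogonal hψorth hu]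

/-- If a monic polynomial family `{P_u}` is orthogonal with respect to a unital
linear functional `φ` whose induced form `⟨P,Q⟩ = φ(P*Q)` is positive semidefinite, then `φ`
is uniquely determined: two such functionals sharing the orthogonal family coincide. -/
theorem state_of_orthogonality_unique (n : ℕ)
    (P : List (Fin n) → FreeAlgebra ℝ (Fin n)) (hP : IsMonicFamily P)
    (φ ψ : FreeAlgebra ℝ (Fin n) →ₗ[ℝ] ℝ)
    (hφ1 : φ 1 = 1) (hψ1 : ψ 1 = 1)
    (hφpos : ∀ A : FreeAlgebra ℝ (Fin n), 0 ≤ φ (ncStar A * A))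
    (hψpos : ∀ A : FreeAlgebra ℝ (Fin n), 0 ≤ ψ (ncStar A * A))
    (hφorth : ∀ u v : List (Fin n), u ≠ v → φ (ncStar (P u) * P v) = 0)
    (hψorth : ∀ u v : List (Fin n), u ≠ v → ψ (ncStar (P u) * P v) = 0) :
    φ = ψ :=
  state_of_orthogonality_unique_general n P hP φ ψ hφ1 hψ1 hφorth hψorth
end

section
/- Let φ be a faithful state on ℝ⟨x₁,…,xₙ⟩ (φ(A*A) ≥ 0 with equality only for A = 0), and suppose the monic family {P_u} is orthogonal with respect to φ. Then the polynomials satisfy a three-term-type recursion: x_i P_u = P_{(i,u)} + Σ_{|w|=|u|} B_{i,w,u} P_w + Σ_{|v|=|u|-1} C_{i,v,u} P_v, where C_{i,v,u} = 0 unless u = (i,v), and C_{i,v,(i,v)} > 0. -/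
lemma mono_cons {n : ℕ} (i : Fin n) (u : List (Fin n)) :
    mono (i :: u) = FreeAlgebra.ι ℝ i * mono u := by simp [mono]

/-- `ncStar` as a linear map. -/
noncomputable def ncStarL (n : ℕ) : FreeAlgebra ℝ (Fin n) →ₗ[ℝ] FreeAlgebra ℝ (Fin n) :=
  (MulOpposite.opLinearEquiv ℝ).symm.toLinearMap ∘ₗ
    (FreeAlgebra.lift ℝ (fun i => MulOpposite.op (FreeAlgebra.ι ℝ i))).toLinearMap

lemma ncStar_eq {n : ℕ} (A : FreeAlgebra ℝ (Fin n)) : ncStar A = ncStarL n A := rfl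

lemma ncStar_mul {n : ℕ} (A B : FreeAlgebra ℝ (Fin n)) :
    ncStar (A * B) = ncStar B * ncStar A := by
  simp [ncStar, map_mul]

lemma ncStar_ι {n : ℕ} (i : Fin n) : ncStar (FreeAlgebra.ι ℝ i) = FreeAlgebra.ι ℝ i := by
  simp [ncStar]

/-- A vector from a list with a proof of its length. -/
def vecOf {n k : ℕ} (w : List (Fin n)) (h : w.length = k) : List.Vector (Fin n) k := ⟨w, h⟩

lemma vecOf_toList {n k : ℕ} (w : List (Fin n)) (h : w.length = k) :
    (vecOf w h).toList = w := rfl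

/-- The coefficient of the monomial `x_w` as a linear functional. -/
noncomputable def coeffL (n : ℕ) (w : List (Fin n)) : FreeAlgebra ℝ (Fin n) →ₗ[ℝ] ℝ :=
  (Finsupp.lapply (FreeMonoid.ofList w)) ∘ₗ (MonoidAlgebra.coeffLinearEquiv ℝ).toLinearMap ∘ₗ
    (FreeAlgebra.equivMonoidAlgebraFreeMonoid (R := ℝ) (X := Fin n)).toLinearMap

lemma equiv_mono {n : ℕ} (u : List (Fin n)) :
    FreeAlgebra.equivMonoidAlgebraFreeMonoid (mono u)
      = MonoidAlgebra.single (FreeMonoid.ofList u) (1:ℝ) := by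
  induction u with
  | nil => simp [mono, MonoidAlgebra.one_def]
  | cons i t ih =>
      rw [mono_cons, map_mul, ih]
      have h : FreeAlgebra.equivMonoidAlgebraFreeMonoid (FreeAlgebra.ι ℝ i)
          = MonoidAlgebra.single (FreeMonoid.of i) (1:ℝ) := by
        simp [FreeAlgebra.equivMonoidAlgebraFreeMonoid]
      rw [h, MonoidAlgebra.single_mul_single]
      simp

lemma coeffL_mono {n : ℕ} (w u : List (Fin n)) :
    coeffL n w (mono u) = if u = w then 1 else 0 := by
  classical
  have h : coeffL n w (mono u)
      = (FreeAlgebra.equivMonoidAlgebraFreeMonoid (mono u)).coeff (FreeMonoid.ofList w) := rfl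
  rw [h, equiv_mono, MonoidAlgebra.coeff_single, Finsupp.single_apply]
  simp [FreeMonoid.ofList.injective.eq_iff, eq_comm]

lemma lowerOrder_le {n : ℕ} {k k' : ℕ} (h : k ≤ k') : lowerOrder n k ≤ lowerOrder n k' :=
  Submodule.span_mono (fun _ ⟨v, hv, he⟩ => ⟨v, lt_of_lt_of_le hv h, he⟩)

lemma coeffL_lower {n : ℕ} {w : List (Fin n)} {A : FreeAlgebra ℝ (Fin n)}
    (hA : A ∈ lowerOrder n w.length) : coeffL n w A = 0 := by
  have hle : lowerOrder n w.length ≤ LinearMap.ker (coeffL n w) := by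
    apply Submodule.span_le.mpr
    rintro _ ⟨v, hv, rfl⟩
    simp only [SetLike.mem_coe, LinearMap.mem_ker, coeffL_mono]
    rw [if_neg]
    intro h; rw [h] at hv; exact lt_irrefl _ hv
  exact hle hA

lemma mul_lower {n k : ℕ} (i : Fin n) {A : FreeAlgebra ℝ (Fin n)}
    (h : A ∈ lowerOrder n k) : FreeAlgebra.ι ℝ i * A ∈ lowerOrder n (k+1) := by
  have hle : lowerOrder n k ≤
      Submodule.comap (LinearMap.mulLeft ℝ (FreeAlgebra.ι ℝ i)) (lowerOrder n (k+1)) := by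
    apply Submodule.span_le.mpr
    rintro _ ⟨v, hv, rfl⟩
    simp only [SetLike.mem_coe, Submodule.mem_comap, LinearMap.mulLeft_apply]
    exact Submodule.subset_span ⟨i :: v, by simpa using hv, (mono_cons i v).symm⟩
  exact hle h

section Family
variable {n : ℕ} {P : List (Fin n) → FreeAlgebra ℝ (Fin n)} (hP : IsMonicFamily P)

include hP

lemma P_mem (u : List (Fin n)) : P u ∈ lowerOrder n (u.length + 1) := by
  have h1 : P u - mono u ∈ lowerOrder n (u.length + 1) :=
    lowerOrder_le (Nat.le_succ _) (hP.2 u)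
  have h2 : mono u ∈ lowerOrder n (u.length + 1) :=
    Submodule.subset_span ⟨u, Nat.lt_succ_self _, rfl⟩
  simpa using add_mem h1 h2

lemma span_P (k : ℕ) : lowerOrder n k ≤
    Submodule.span ℝ {p | ∃ w : List (Fin n), w.length < k ∧ p = P w} := by
  induction k using Nat.strong_induction_on with
  | _ k ih =>
    apply Submodule.span_le.mpr
    rintro _ ⟨v, hv, rfl⟩
    have h1 : P v ∈ Submodule.span ℝ {p | ∃ w : List (Fin n), w.length < k ∧ p = P w} :=
      Submodule.subset_span ⟨v, hv, rfl⟩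
    have h3 := ih v.length hv (hP.2 v)
    have h4 : Submodule.span ℝ {p | ∃ w : List (Fin n), w.length < v.length ∧ p = P w} ≤
        Submodule.span ℝ {p | ∃ w : List (Fin n), w.length < k ∧ p = P w} :=
      Submodule.span_mono (fun _ ⟨w, hw, he⟩ => ⟨w, lt_trans hw hv, he⟩)
    have h5 : mono v = P v - (P v - mono v) := by abel
    rw [h5]
    exact sub_mem h1 (h4 h3)

lemma P_ne_zero (u : List (Fin n)) : P u ≠ 0 := by
  intro h
  have h1 : coeffL n u (P u) = 1 := by
    have h0 : P u = (P u - mono u) + mono u := by abel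
    rw [h0, map_add, coeffL_lower (hP.2 u), coeffL_mono]
    simp
  rw [h, map_zero] at h1
  exact one_ne_zero h1.symm

variable (φ : FreeAlgebra ℝ (Fin n) →ₗ[ℝ] ℝ)
    (horth : ∀ u v : List (Fin n), u ≠ v → φ (ncStar (P u) * P v) = 0)

include horth in
lemma orth_lower {k : ℕ} {A : FreeAlgebra ℝ (Fin n)} (hA : A ∈ lowerOrder n k)
    {u : List (Fin n)} (hk : k ≤ u.length) : φ (ncStar A * P u) = 0 := by
  set T : FreeAlgebra ℝ (Fin n) →ₗ[ℝ] ℝ :=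
    φ ∘ₗ (LinearMap.mulRight ℝ (P u)) ∘ₗ ncStarL n with hT
  have hle : Submodule.span ℝ {p | ∃ w : List (Fin n), w.length < k ∧ p = P w} ≤
      LinearMap.ker T := by
    apply Submodule.span_le.mpr
    rintro _ ⟨w, hw, rfl⟩
    simp only [SetLike.mem_coe, LinearMap.mem_ker, hT, LinearMap.comp_apply,
      LinearMap.mulRight_apply]
    have hne : w ≠ u := by intro h; rw [h] at hw; omega
    exact horth w u hne
  have h0 := LinearMap.mem_ker.mp (hle (span_P hP k hA))
  simp only [hT, LinearMap.comp_apply, LinearMap.mulRight_apply] at h0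
  rw [ncStar_eq]
  exact h0

end Family

/-- Favard-type theorem, forward direction: if the monic family `{P_u}` is
orthogonal with respect to a faithful state `φ`, then it satisfies the recursion
`x_i P_u = P_{(i,u)} + Σ_{|w|=|u|} B_{i,w,u} P_w + Σ_{|v|=|u|-1} C_{i,v,u} P_v`,
where `C_{i,v,u} = 0` unless `u = (i,v)`, and `C_{i,v,(i,v)} > 0`. -/
theorem orthogonal_implies_recursion (n : ℕ)
    (P : List (Fin n) → FreeAlgebra ℝ (Fin n)) (hP : IsMonicFamily P)
    (φ : FreeAlgebra ℝ (Fin n) →ₗ[ℝ] ℝ) (hφ1 : φ 1 = 1)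
    (hφpos : ∀ A : FreeAlgebra ℝ (Fin n), 0 ≤ φ (ncStar A * A))
    (hφfaith : ∀ A : FreeAlgebra ℝ (Fin n), φ (ncStar A * A) = 0 → A = 0)
    (horth : ∀ u v : List (Fin n), u ≠ v → φ (ncStar (P u) * P v) = 0) :
    ∃ B C : Fin n → List (Fin n) → List (Fin n) → ℝ,
      (∀ (i : Fin n) (u : List (Fin n)),
        FreeAlgebra.ι ℝ i * P u
          = P (i :: u)
            + (∑ w : List.Vector (Fin n) u.length, B i w.toList u • P w.toList)
            + (∑ v : List.Vector (Fin n) (u.length - 1), C i v.toList u • P v.toList))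
      ∧ (∀ (i : Fin n) (v u : List (Fin n)), u ≠ i :: v → C i v u = 0)
      ∧ (∀ (i : Fin n) (v : List (Fin n)), 0 < C i v (i :: v)) := by
  classical
  set N : List (Fin n) → ℝ := fun u => φ (ncStar (P u) * P u) with hN
  have hNpos : ∀ u, 0 < N u := by
    intro u
    rcases lt_or_eq_of_le (hφpos (P u)) with h | h
    · exact h
    · exact absurd (hφfaith (P u) h.symm) (P_ne_zero hP u)
  have key : ∀ w u : List (Fin n), φ (ncStar (P w) * P u) = if w = u then N u else 0 := by
    intro w u
    by_cases h : w = u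
    · subst h; simp [hN]
    · simp [h, horth w u h]
  -- the difference of x_i P_u and P_{i::u} is of lower order
  have hdiff : ∀ (i : Fin n) (u : List (Fin n)),
      FreeAlgebra.ι ℝ i * P u - P (i :: u) ∈ lowerOrder n (u.length + 1) := by
    intro i u
    have h1 : FreeAlgebra.ι ℝ i * P u - P (i :: u)
        = FreeAlgebra.ι ℝ i * (P u - mono u) - (P (i :: u) - mono (i :: u)) := by
      rw [mono_cons, mul_sub]; abel
    rw [h1]
    exact sub_mem (mul_lower i (hP.2 u)) (by simpa using hP.2 (i :: u))
  refine ⟨fun i w u => φ (ncStar (P w) * (FreeAlgebra.ι ℝ i * P u)) / N w,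
    fun i v u => if u = i :: v then N (i :: v) / N v else 0, ?_, ?_, ?_⟩
  · intro i u
    simp only
    set k := u.length with hk
    set Bsum := ∑ w : List.Vector (Fin n) k,
      (φ (ncStar (P w.toList) * (FreeAlgebra.ι ℝ i * P u)) / N w.toList) • P w.toList with hBsum
    set Csum := ∑ v : List.Vector (Fin n) (k - 1),
      (if u = i :: v.toList then N (i :: v.toList) / N v.toList else 0) • P v.toList with hCsum
    set D := FreeAlgebra.ι ℝ i * P u - (P (i :: u) + Bsum + Csum) with hD
    -- D is of lower order
    have hDmem : D ∈ lowerOrder n (k + 1) := by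
      have hB : Bsum ∈ lowerOrder n (k + 1) := by
        apply Submodule.sum_mem
        intro w _
        exact Submodule.smul_mem _ _ (by simpa [w.toList_length] using P_mem hP w.toList)
      have hC : Csum ∈ lowerOrder n (k + 1) := by
        apply Submodule.sum_mem
        intro v _
        refine Submodule.smul_mem _ _ (lowerOrder_le ?_ (P_mem hP v.toList))
        rw [v.toList_length]; omega
      have h6 := sub_mem (sub_mem (hdiff i u) hB) hC
      simpa [hD, sub_sub] using h6
    -- orthogonality of D to all P_w with |w| ≤ k
    have hDorth : ∀ w : List (Fin n), w.length ≤ k → φ (ncStar (P w) * D) = 0 := by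
      intro w hw
      have expand : φ (ncStar (P w) * D)
          = φ (ncStar (P w) * (FreeAlgebra.ι ℝ i * P u))
            - (φ (ncStar (P w) * P (i :: u))
              + (∑ w' : List.Vector (Fin n) k,
                  (φ (ncStar (P w'.toList) * (FreeAlgebra.ι ℝ i * P u)) / N w'.toList)
                    * φ (ncStar (P w) * P w'.toList))
              + (∑ v : List.Vector (Fin n) (k - 1),
                  (if u = i :: v.toList then N (i :: v.toList) / N v.toList else 0)
                    * φ (ncStar (P w) * P v.toList))) := by
        simp only [hD, hBsum, hCsum, mul_sub, mul_add, Finset.mul_sum, mul_smul_comm,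
          map_sub, map_add, map_sum, map_smul, smul_eq_mul]
      rw [expand]
      have t2 : φ (ncStar (P w) * P (i :: u)) = 0 := by
        rw [key, if_neg]; intro h; rw [h] at hw; simp at hw; omega
      by_cases hwk : w.length = k
      · -- |w| = k : the B-term cancels t1, and the C-sum vanishes
        have t3 : (∑ w' : List.Vector (Fin n) k,
            (φ (ncStar (P w'.toList) * (FreeAlgebra.ι ℝ i * P u)) / N w'.toList)
              * φ (ncStar (P w) * P w'.toList))
            = φ (ncStar (P w) * (FreeAlgebra.ι ℝ i * P u)) := by
          rw [Fintype.sum_eq_single (vecOf w hwk)]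
          · rw [vecOf_toList, key, if_pos rfl]
            exact div_mul_cancel₀ _ (hNpos w).ne'
          · intro x hx
            have hne : w ≠ x.toList := by
              intro h
              apply hx
              apply List.Vector.toList_injective
              rw [vecOf_toList, ← h]
            rw [key, if_neg hne, mul_zero]
        have t4 : (∑ v : List.Vector (Fin n) (k - 1),
            (if u = i :: v.toList then N (i :: v.toList) / N v.toList else 0)
              * φ (ncStar (P w) * P v.toList)) = 0 := by
          apply Finset.sum_eq_zero
          intro v _
          by_cases hc : u = i :: v.toList
          · have hlen : v.toList.length = k - 1 := v.toList_length
            have hul : u.length = v.toList.length + 1 := by rw [hc]; simp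
            have hne : w ≠ v.toList := by
              intro h; rw [h, hlen] at hwk; omega
            rw [key, if_neg hne, mul_zero]
          · rw [if_neg hc, zero_mul]
        rw [t2, t3, t4]; ring
      · -- |w| < k
        have hwlt : w.length < k := lt_of_le_of_ne hw hwk
        have t3 : (∑ w' : List.Vector (Fin n) k,
            (φ (ncStar (P w'.toList) * (FreeAlgebra.ι ℝ i * P u)) / N w'.toList)
              * φ (ncStar (P w) * P w'.toList)) = 0 := by
          apply Finset.sum_eq_zero
          intro w' _
          have hne : w ≠ w'.toList := by
            intro h; rw [h, w'.toList_length] at hwlt; omega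
          rw [key, if_neg hne, mul_zero]
        -- compute the first term via adjointness
        have t1 : φ (ncStar (P w) * (FreeAlgebra.ι ℝ i * P u))
            = if i :: w = u then N u else 0 := by
          have ha : ncStar (P w) * (FreeAlgebra.ι ℝ i * P u)
              = ncStar (FreeAlgebra.ι ℝ i * P w) * P u := by
            rw [ncStar_mul, ncStar_ι, mul_assoc]
          rw [ha]
          have hdec : FreeAlgebra.ι ℝ i * P w
              = P (i :: w) + (FreeAlgebra.ι ℝ i * P w - P (i :: w)) := by abel
          rw [hdec, ncStar_eq, map_add, add_mul, map_add, ← ncStar_eq, ← ncStar_eq]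
          have hz : φ (ncStar (FreeAlgebra.ι ℝ i * P w - P (i :: w)) * P u) = 0 :=
            orth_lower hP φ horth (hdiff i w) (by omega)
          rw [hz, key, add_zero]
        have t4 : (∑ v : List.Vector (Fin n) (k - 1),
            (if u = i :: v.toList then N (i :: v.toList) / N v.toList else 0)
              * φ (ncStar (P w) * P v.toList))
            = if i :: w = u then N u else 0 := by
          by_cases hu : u = i :: w
          · have hwl : w.length = k - 1 := by rw [hk, hu]; simp
            rw [Fintype.sum_eq_single (vecOf w hwl)]
            · rw [vecOf_toList, if_pos hu, key, if_pos rfl, if_pos hu.symm, hu]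
              exact div_mul_cancel₀ _ (hNpos w).ne'
            · intro x hx
              have hne : w ≠ x.toList := by
                intro h
                apply hx
                apply List.Vector.toList_injective
                rw [vecOf_toList, ← h]
              rw [key, if_neg hne, mul_zero]
          · rw [if_neg (fun h => hu h.symm)]
            apply Finset.sum_eq_zero
            intro v _
            by_cases hc : u = i :: v.toList
            · have hne : w ≠ v.toList := by
                intro h; rw [← h] at hc; exact hu hc
              rw [key, if_neg hne, mul_zero]
            · rw [if_neg hc, zero_mul]
        rw [t1, t2, t3, t4]; ring
    -- conclude D = 0 using faithfulness
    have hDzero : D = 0 := by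
      apply hφfaith
      set T : FreeAlgebra ℝ (Fin n) →ₗ[ℝ] ℝ :=
        φ ∘ₗ (LinearMap.mulRight ℝ D) ∘ₗ ncStarL n with hT
      have hle : Submodule.span ℝ {p | ∃ w : List (Fin n), w.length < k + 1 ∧ p = P w} ≤
          LinearMap.ker T := by
        apply Submodule.span_le.mpr
        rintro _ ⟨w, hwlt, rfl⟩
        simp only [SetLike.mem_coe, LinearMap.mem_ker, hT, LinearMap.comp_apply,
          LinearMap.mulRight_apply]
        exact hDorth w (by omega)
      have h0 := LinearMap.mem_ker.mp (hle (span_P hP (k+1) hDmem))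
      simp only [hT, LinearMap.comp_apply, LinearMap.mulRight_apply] at h0
      rw [ncStar_eq]
      exact h0
    have hfin := sub_eq_zero.mp hDzero
    rw [hfin]
  · intro i v u h
    exact if_neg h
  · intro i v
    have h := div_pos (hNpos (i :: v)) (hNpos v)
    simpa using h
end

section
/- Let φ be a state with free cumulant generating function R satisfying R(z) = Σᵢ zᵢ² + higher order terms and the second-order equation DᵢDⱼR = δᵢⱼ + Σₜ Bᵢⱼᵗ DₜR + Σ_{s,t} C_{ij}^{st} DₛR DₜR in non-commuting variables. Then the third free cumulants are given by R[xⱼ xᵢ xₜ] = Bᵢⱼᵗ, and the fourth free cumulants by R[xⱼ xᵢ x_c x_d] = Σₜ Bᵢⱼᵗ B_{ct}^d + C_{ij}^{cd}. -/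
/-- A non-commutative formal power series in `z₁,…,zₙ` over `ℝ`, given by its
coefficient function on words. -/
abbrev NCS (n : ℕ) := List (Fin n) → ℝ

/-- Product of non-commutative power series (convolution over splittings of the word). -/
noncomputable def ncsMul {n : ℕ} (F G : NCS n) : NCS n := fun w =>
  ∑ k ∈ Finset.range (w.length + 1), F (w.take k) * G (w.drop k)

/-- Left partial derivative `Dᵢ`. -/
def ncsD {n : ℕ} (i : Fin n) (F : NCS n) : NCS n := fun w => F (i :: w)

/-- The series `zᵢ`. -/
def ncsZ {n : ℕ} (i : Fin n) : NCS n := fun w => if w = [i] then 1 else 0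

/-- The series `1 + M`. -/
def onePlus {n : ℕ} (M : NCS n) : NCS n := fun w => (if w = [] then 1 else 0) + M w

/-- Auxiliary fuelled definition of composition `R(V₁(z),…,Vₙ(z))` of non-commutative
power series, for tuples `V` with vanishing constant terms. -/
noncomputable def ncsCompAux {n : ℕ} (V : Fin n → NCS n) : ℕ → NCS n → NCS n
  | 0, R => fun w => if w = [] then R [] else 0
  | (fuel + 1), R => fun w =>
      if w = [] then R []
      else ∑ i : Fin n, ∑ k ∈ Finset.range w.length,
        V i (w.take (k + 1)) * ncsCompAux V fuel (fun v => R (i :: v)) (w.drop (k + 1))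

/-- Composition `R(V₁(z),…,Vₙ(z))` of non-commutative power series. -/
noncomputable def ncsComp {n : ℕ} (R : NCS n) (V : Fin n → NCS n) : NCS n :=
  fun w => ncsCompAux V w.length R w

/-- The tuple `w ↦ wᵢ(1 + M(w))`: the substitution appearing in the
moment–cumulant relation `R(w₁(1+M(w)),…,wₙ(1+M(w))) = M(w)`. -/
def zTimesOnePlus {n : ℕ} (M : NCS n) (i : Fin n) : NCS n := fun w =>
  match w with
  | [] => 0
  | (j :: t) => if j = i then (if t = [] then 1 else 0) + M t else 0

/-! Compare coefficients of the second-order equation at words of length one and two. Since `R`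
has no linear part, `DₛR` has no constant term, so `DₛR · DₜR` vanishes on single letters and at
the word `c d` reduces to the product of second cumulants `R[s, c] R[t, d] = δ_{sc} δ_{td}`. -/

section ncsMul

variable {n : ℕ}

theorem ncsMul_singleton (F G : NCS n) (x : Fin n) :
    ncsMul F G [x] = F [] * G [x] + F [x] * G [] := by
  simp [ncsMul, Finset.sum_range_succ]

theorem ncsMul_pair (F G : NCS n) (x y : Fin n) :
    ncsMul F G [x, y] = F [] * G [x, y] + F [x] * G [y] + F [x, y] * G [] := by
  simp [ncsMul, Finset.sum_range_succ]

variable {R : NCS n} (hR1 : ∀ i : Fin n, R [i] = 0)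
include hR1

theorem ncsMul_ncsD_singleton_of_no_linear_term (s t x : Fin n) :
    ncsMul (ncsD s R) (ncsD t R) [x] = 0 := by
  simp [ncsMul_singleton, ncsD, hR1]

theorem ncsMul_ncsD_pair_of_no_linear_term (s t x y : Fin n) :
    ncsMul (ncsD s R) (ncsD t R) [x, y] = R [s, x] * R [t, y] := by
  simp [ncsMul_pair, ncsD, hR1]

end ncsMul

theorem cumulants_from_second_order_equation_general (n : ℕ) (R : NCS n)
    (B : Fin n → Fin n → Fin n → ℝ) (C : Fin n → Fin n → Fin n → Fin n → ℝ)
    (hR1 : ∀ i : Fin n, R [i] = 0)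
    (hR2 : ∀ i j : Fin n, R [i, j] = if i = j then 1 else 0)
    (heq : ∀ (i j : Fin n) (w : List (Fin n)),
      R (j :: i :: w)
        = (if i = j ∧ w = [] then (1 : ℝ) else 0)
          + (∑ t : Fin n, B i j t * R (t :: w))
          + (∑ s : Fin n, ∑ t : Fin n,
              C i j s t * ncsMul (ncsD s R) (ncsD t R) w)) :
    (∀ i j t : Fin n, R [j, i, t] = B i j t)
    ∧ (∀ i j c d : Fin n,
        R [j, i, c, d] = (∑ t : Fin n, B i j t * B c t d) + C i j c d) := by
  have third : ∀ i j t : Fin n, R [j, i, t] = B i j t := by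
    intro i j t
    rw [heq]
    simp [ncsMul_ncsD_singleton_of_no_linear_term hR1, hR2]
  refine ⟨third, fun i j c d => ?_⟩
  rw [heq]
  simp [ncsMul_ncsD_pair_of_no_linear_term hR1, hR2, third]

/-- if the free cumulant generating function `R = Σᵢ zᵢ² + h.o.t.` satisfies
`DᵢDⱼR = δᵢⱼ + Σₜ Bᵢⱼᵗ DₜR + Σ_{s,t} C_{ij}^{st} DₛR DₜR`, then
`R[xⱼxᵢxₜ] = Bᵢⱼᵗ` and `R[xⱼxᵢx_c x_d] = Σₜ Bᵢⱼᵗ B_{ct}^d + C_{ij}^{cd}`. -/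
theorem cumulants_from_second_order_equation (n : ℕ) (R : NCS n)
    (B : Fin n → Fin n → Fin n → ℝ) (C : Fin n → Fin n → Fin n → Fin n → ℝ)
    (hR0 : R [] = 0) (hR1 : ∀ i : Fin n, R [i] = 0)
    (hR2 : ∀ i j : Fin n, R [i, j] = if i = j then 1 else 0)
    (heq : ∀ (i j : Fin n) (w : List (Fin n)),
      R (j :: i :: w)
        = (if i = j ∧ w = [] then (1 : ℝ) else 0)
          + (∑ t : Fin n, B i j t * R (t :: w))
          + (∑ s : Fin n, ∑ t : Fin n,
              C i j s t * ncsMul (ncsD s R) (ncsD t R) w)) :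
    (∀ i j t : Fin n, R [j, i, t] = B i j t)
    ∧ (∀ i j c d : Fin n,
        R [j, i, c, d] = (∑ t : Fin n, B i j t * B c t d) + C i j c d) :=
  cumulants_from_second_order_equation_general n R B C hR1 hR2 heq
end

section
/- Suppose a tracial free Meixner state has recursion data B, C as in the second-order cumulant equation DᵢDⱼR = δᵢⱼ + Σₜ Bᵢⱼᵗ DₜR + Σ_{s,t} C_{ij}^{st} DₛR DₜR. Then Bᵢⱼᵗ is invariant under cyclic permutations of (j, i, t), and the quantity Σₜ Bᵢⱼᵗ B_{ct}^d + C_{ij}^{cd} is invariant under cyclic permutations of (j, i, c, d). -/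
/-! The equation for `DᵢDⱼR`, read off at the words `[t]` and `[c, d]`, expresses the free
cumulants `R[j,i,t]` and `R[j,i,c,d]` through `B` and `C`: since `R` has no linear term and the
identity as covariance, the quadratic term contributes nothing at `[t]` and exactly
`C_{ij}^{cd}` at `[c, d]`. Traciality makes these cumulants invariant under rotation of the word,
which transfers to the coefficients. -/

namespace NCS

variable {n : ℕ}

/-- The free Meixner equation `DᵢDⱼR = δᵢⱼ + Σₜ Bᵢⱼᵗ DₜR + Σ_{s,t} C_{ij}^{st} DₛR DₜR`, whose
coefficient at `w` on the left is `R (j :: i :: w)`. -/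
def SatisfiesMeixnerEquation (R : NCS n) (B : Fin n → Fin n → Fin n → ℝ)
    (C : Fin n → Fin n → Fin n → Fin n → ℝ) : Prop :=
  ∀ (i j : Fin n) (w : List (Fin n)),
    R (j :: i :: w)
      = (if i = j ∧ w = [] then (1 : ℝ) else 0)
        + (∑ t : Fin n, B i j t * R (t :: w))
        + (∑ s : Fin n, ∑ t : Fin n, C i j s t * ncsMul (ncsD s R) (ncsD t R) w)

section

variable {R : NCS n} (hR1 : ∀ i : Fin n, R [i] = 0)
include hR1

theorem ncsMul_ncsD_singleton_eq_zero (s t a : Fin n) : ncsMul (ncsD s R) (ncsD t R) [a] = 0 := by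
  simp [ncsMul, ncsD, Finset.sum_range_succ, hR1]

theorem ncsMul_ncsD_pair (hR2 : ∀ i j : Fin n, R [i, j] = if i = j then 1 else 0)
    (s t c d : Fin n) :
    ncsMul (ncsD s R) (ncsD t R) [c, d] = if s = c ∧ t = d then 1 else 0 := by
  simp only [and_comm (a := s = c), ite_and]
  simp [ncsMul, ncsD, Finset.sum_range_succ, hR1, hR2]

end

section

variable {R : NCS n} {B : Fin n → Fin n → Fin n → ℝ} {C : Fin n → Fin n → Fin n → Fin n → ℝ}
  (hR1 : ∀ i : Fin n, R [i] = 0) (hR2 : ∀ i j : Fin n, R [i, j] = if i = j then 1 else 0)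
  (heq : SatisfiesMeixnerEquation R B C)
include hR1 hR2 heq

theorem cumulant_three_eq (i j t : Fin n) : R [j, i, t] = B i j t := by
  simp [heq i j [t], ncsMul_ncsD_singleton_eq_zero hR1, hR2, mul_ite]

theorem cumulant_four_eq (i j c d : Fin n) :
    R [j, i, c, d] = (∑ t : Fin n, B i j t * B c t d) + C i j c d := by
  simp [heq i j [c, d], ncsMul_ncsD_pair hR1 hR2, cumulant_three_eq hR1 hR2 heq, mul_ite,
    ite_and, Finset.sum_ite_eq']

end

end NCS

open NCS in
theorem tracial_Meixner_coefficient_cyclic_symmetry_general (n : ℕ) (R : NCS n)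
    (B : Fin n → Fin n → Fin n → ℝ) (C : Fin n → Fin n → Fin n → Fin n → ℝ)
    (hcyc : ∀ (i : Fin n) (u : List (Fin n)), R (u ++ [i]) = R (i :: u))
    (hR1 : ∀ i : Fin n, R [i] = 0)
    (hR2 : ∀ i j : Fin n, R [i, j] = if i = j then 1 else 0)
    (heq : ∀ (i j : Fin n) (w : List (Fin n)),
      R (j :: i :: w)
        = (if i = j ∧ w = [] then (1 : ℝ) else 0)
          + (∑ t : Fin n, B i j t * R (t :: w))
          + (∑ s : Fin n, ∑ t : Fin n,
              C i j s t * ncsMul (ncsD s R) (ncsD t R) w)) :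
    (∀ i j t : Fin n, B i j t = B t i j)
    ∧ (∀ i j c d : Fin n,
        (∑ t : Fin n, B i j t * B c t d) + C i j c d
          = (∑ t : Fin n, B c i t * B d t j) + C c i d j) := by
  constructor
  · intro i j t
    rw [← cumulant_three_eq hR1 hR2 heq, ← cumulant_three_eq hR1 hR2 heq]
    exact (hcyc j [i, t]).symm
  · intro i j c d
    rw [← cumulant_four_eq hR1 hR2 heq, ← cumulant_four_eq hR1 hR2 heq]
    exact (hcyc j [i, c, d]).symm

/-- for a tracial free Meixner state (so the free cumulants are invariant
under cyclic permutations of the word) whose cumulant generating function satisfies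
`DᵢDⱼR = δᵢⱼ + Σₜ Bᵢⱼᵗ DₜR + Σ_{s,t} C_{ij}^{st} DₛR DₜR`, the coefficient `Bᵢⱼᵗ` is
invariant under cyclic permutations of `(j,i,t)`, and `Σₜ Bᵢⱼᵗ B_{ct}^d + C_{ij}^{cd}`
is invariant under cyclic permutations of `(j,i,c,d)`. -/
theorem tracial_Meixner_coefficient_cyclic_symmetry (n : ℕ) (R : NCS n)
    (B : Fin n → Fin n → Fin n → ℝ) (C : Fin n → Fin n → Fin n → Fin n → ℝ)
    (hcyc : ∀ (i : Fin n) (u : List (Fin n)), R (u ++ [i]) = R (i :: u))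
    (hR0 : R [] = 0) (hR1 : ∀ i : Fin n, R [i] = 0)
    (hR2 : ∀ i j : Fin n, R [i, j] = if i = j then 1 else 0)
    (heq : ∀ (i j : Fin n) (w : List (Fin n)),
      R (j :: i :: w)
        = (if i = j ∧ w = [] then (1 : ℝ) else 0)
          + (∑ t : Fin n, B i j t * R (t :: w))
          + (∑ s : Fin n, ∑ t : Fin n,
              C i j s t * ncsMul (ncsD s R) (ncsD t R) w)) :
    (∀ i j t : Fin n, B i j t = B t i j)
    ∧ (∀ i j c d : Fin n,
        (∑ t : Fin n, B i j t * B c t d) + C i j c d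
          = (∑ t : Fin n, B c i t * B d t j) + C c i d j) :=
  tracial_Meixner_coefficient_cyclic_symmetry_general n R B C hcyc hR1 hR2 heq
end

section
/- Let (Bᵗ)_{t=1}^n be a family of real n×n matrices with entries Bᵢⱼᵗ that are symmetric under all 6 permutations of the three indices (i, j, t), and suppose Σₜ Bᵢⱼᵗ B_{ct}^d = Σₜ B_{ci}^t B_{dt}^j for all i, j, c, d (the cyclic symmetry condition with C ≡ 0). Then the matrices Bᵗ mutually commute: Bʲ Bᶜ = Bᶜ Bʲ for all j, c. -/
theorem Matrix.mul_apply_eq_sum_of_symmetric_tensor {ι R : Type*} [Fintype ι] [CommSemiring R]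
    (B : ι → Matrix ι ι R) (hsymm1 : ∀ t i j, B t i j = B t j i)
    (hsymm2 : ∀ t i j, B t i j = B i t j) (j c a b : ι) :
    (B j * B c) a b = ∑ t, B t a j * B b c t := by
  rw [Matrix.mul_apply]
  refine Finset.sum_congr rfl fun t _ => ?_
  rw [hsymm2 j a t, hsymm1 a j t, hsymm2 a t j, hsymm1 c t b, hsymm2 c b t]

/-- Let `B^t` (t = 1,…,n) be real `n×n` matrices whose entries `B t i j = Bᵢⱼᵗ`
are symmetric under all permutations of the three indices `(i, j, t)`, and suppose
`Σₜ Bᵢⱼᵗ B_{ct}^d = Σₜ B_{ci}^t B_{dt}^j` for all `i, j, c, d`.  Then the matrices `B^t`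
mutually commute. -/
theorem recursion_matrices_commute (n : ℕ) (B : Fin n → Matrix (Fin n) (Fin n) ℝ)
    (hsymm1 : ∀ t i j, B t i j = B t j i)
    (hsymm2 : ∀ t i j, B t i j = B i t j)
    (hcyc : ∀ i j c d : Fin n, (∑ t, B t i j * B d c t) = ∑ t, B t c i * B j d t) :
    ∀ j c : Fin n, B j * B c = B c * B j := by
  intro j c
  ext a b
  have entry := Matrix.mul_apply_eq_sum_of_symmetric_tensor B hsymm1 hsymm2
  calc (B j * B c) a b
      = ∑ t, B t a j * B b c t := entry j c a b
    _ = ∑ t, B t c a * B j b t := hcyc a j c b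
    _ = ∑ t, B t a c * B b j t := by simp only [hsymm1 _ c a, hsymm2 _ j]
    _ = (B c * B j) a b := (entry c j a b).symm
end

section
/- Let R_ψ(z) = Σᵢ (bᵢ zᵢ + cᵢ zᵢ²) be the free cumulant generating function of a free semicircular family with means bᵢ and variances cᵢ, and let M_ψ be the corresponding moment generating function related by R_ψ(w(1+M_ψ(w))) = M_ψ(w). Define R_φ(w) = Σⱼ wⱼ (1 + M_ψ(w)) wⱼ. Then R_φ satisfies the second-order difference equation Dᵢ Dⱼ R_φ(w) = δᵢⱼ + bᵢ Dⱼ R_φ(w) + cᵢ Dᵢ R_φ(w) Dⱼ R_φ(w) for all i, j. -/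
/-- The free cumulant generating function `R_ψ(z) = Σᵢ (bᵢ zᵢ + cᵢ zᵢ²)` of a free
semicircular family with means `bᵢ` and variances `cᵢ`. -/
def semicircularCumulants {n : ℕ} (b c : Fin n → ℝ) : NCS n := fun w =>
  match w with
  | [i] => b i
  | [i, j] => if i = j then c i else 0
  | _ => 0

section Aux
variable {n : ℕ}

lemma mul_z_nil (F : NCS n) (i : Fin n) : ncsMul F (ncsZ i) [] = 0 := by
  simp [ncsMul, ncsZ]

lemma mul_z_concat (F : NCS n) (i : Fin n) (v : List (Fin n)) (l : Fin n) :
    ncsMul F (ncsZ i) (v ++ [l]) = if l = i then F v else 0 := by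
  unfold ncsMul ncsZ
  rw [Finset.sum_eq_single v.length]
  · rw [List.take_left, List.drop_left]
    by_cases h : l = i <;> simp [h]
  · intro k hk hne
    simp only [Finset.mem_range, List.length_append, List.length_singleton] at hk
    have hlen : ((v ++ [l]).drop k).length = v.length + 1 - k := by
      simp [List.length_drop]
    have : (v ++ [l]).drop k ≠ [i] := by
      intro h
      rw [h] at hlen
      simp at hlen
      omega
    simp [this]
  · intro h
    simp [List.length_append] at h

lemma z_mul_nil (F : NCS n) (i : Fin n) : ncsMul (ncsZ i) F [] = 0 := by
  simp [ncsMul, ncsZ]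

lemma z_mul_cons (F : NCS n) (i j : Fin n) (t : List (Fin n)) :
    ncsMul (ncsZ i) F (j :: t) = if j = i then F t else 0 := by
  unfold ncsMul ncsZ
  rw [Finset.sum_eq_single 1]
  · simp only [List.take_succ_cons, List.take_zero, List.drop_succ_cons, List.drop_zero]
    by_cases h : j = i <;> simp [h, List.cons.injEq]
  · intro k hk hne
    simp only [Finset.mem_range, List.length_cons] at hk
    have hlen : ((j :: t).take k).length = k := by
      simp [List.length_take]; omega
    have : (j :: t).take k ≠ [i] := by
      intro h; rw [h] at hlen; simp at hlen; omega
    simp [this]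
  · intro h
    simp at h

lemma comp_zero (V : Fin n → NCS n) : ∀ (fuel : ℕ) (w : List (Fin n)),
    ncsCompAux V fuel (fun _ => (0:ℝ)) w = 0 := by
  intro fuel
  induction fuel with
  | zero => intro w; simp [ncsCompAux]
  | succ f ih => intro w; simp [ncsCompAux, ih]

lemma comp_delta (V : Fin n → NCS n) (a : ℝ) :
    ∀ (fuel : ℕ) (w : List (Fin n)),
    ncsCompAux V fuel (fun t => if t = [] then a else 0) w
      = if w = [] then a else 0 := by
  intro fuel
  cases fuel with
  | zero => intro w; simp [ncsCompAux]
  | succ f =>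
    intro w
    by_cases hw : w = []
    · simp [ncsCompAux, hw]
    · have hz : ∀ i : Fin n, (fun v => if (i :: v : List (Fin n)) = [] then a else 0)
          = (fun _ => (0:ℝ)) := by intro i; funext v; simp
      simp only [ncsCompAux]
      rw [if_neg hw, if_neg hw]
      refine Finset.sum_eq_zero fun i _ => Finset.sum_eq_zero fun k _ => ?_
      rw [hz i, comp_zero]
      ring

end Aux

section Aux2
variable {n : ℕ}

lemma comp_semi (b c : Fin n → ℝ) (M : NCS n) (i : Fin n) :
    ∀ (fuel : ℕ) (u : List (Fin n)), u.length ≤ fuel →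
    ncsCompAux (zTimesOnePlus M) fuel (fun t => semicircularCumulants b c (i :: t)) u
      = if u = [] then b i else zTimesOnePlus M i u * c i := by
  intro fuel u hu
  cases u with
  | nil => cases fuel <;> simp [ncsCompAux, semicircularCumulants]
  | cons x t =>
    obtain ⟨f, rfl⟩ : ∃ f, fuel = f + 1 := ⟨fuel - 1, by simp at hu; omega⟩
    have hinner : ∀ i' : Fin n,
        (fun v => semicircularCumulants b c (i :: i' :: v))
          = (fun v => if v = [] then (if i = i' then c i else 0) else 0) := by
      intro i'; funext v
      match v with
      | [] => simp [semicircularCumulants]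
      | _ :: _ => simp [semicircularCumulants]
    simp only [ncsCompAux]
    rw [if_neg (by simp)]
    have : ∀ i' : Fin n, ∀ k ∈ Finset.range (x :: t).length,
        zTimesOnePlus M i' ((x :: t).take (k + 1)) *
          ncsCompAux (zTimesOnePlus M) f
            (fun v => semicircularCumulants b c (i :: i' :: v)) ((x :: t).drop (k + 1))
        = zTimesOnePlus M i' ((x :: t).take (k + 1)) *
            (if (x :: t).drop (k + 1) = [] then (if i = i' then c i else 0) else 0) := by
      intro i' k _
      rw [hinner i', comp_delta]
    rw [Finset.sum_congr rfl (fun i' _ => Finset.sum_congr rfl (this i'))]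
    rw [Finset.sum_eq_single i]
    · rw [Finset.sum_eq_single t.length]
      · have h1 : (x :: t).take (t.length + 1) = x :: t :=
          List.take_of_length_le (by simp)
        have h2 : (x :: t).drop (t.length + 1) = [] :=
          List.drop_eq_nil_of_le (by simp)
        rw [h1, h2]
        simp
      · intro k hk hne
        simp only [Finset.mem_range, List.length_cons] at hk
        have : ((x :: t).drop (k + 1)) ≠ [] := by
          rw [ne_eq, List.drop_eq_nil_iff]
          simp; omega
        rw [if_neg this, mul_zero]
      · intro h; simp at h
    · intro i' _ hne
      refine Finset.sum_eq_zero fun k _ => ?_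
      have : (if i = i' then c i else 0) = 0 := by simp [Ne.symm hne]
      rw [this]
      simp
    · intro h; simp at h

lemma M_step (b c : Fin n → ℝ) (M : NCS n)
    (hM : ncsComp (semicircularCumulants b c) (zTimesOnePlus M) = M)
    (i : Fin n) (v : List (Fin n)) :
    M (i :: v) = b i * onePlus M v
      + c i * ncsMul (ncsMul (onePlus M) (ncsZ i)) (onePlus M) v := by
  conv_lhs => rw [← hM]
  show ncsCompAux (zTimesOnePlus M) ((i :: v).length) _ (i :: v) = _
  simp only [List.length_cons, ncsCompAux]
  rw [if_neg (by simp)]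
  -- collapse the i' sum
  rw [Finset.sum_eq_single i]
  · -- now the k-sum
    have hterm : ∀ k ∈ Finset.range (v.length + 1),
        zTimesOnePlus M i ((i :: v).take (k + 1)) *
          ncsCompAux (zTimesOnePlus M) v.length
            (fun t => semicircularCumulants b c (i :: t)) ((i :: v).drop (k + 1))
        = onePlus M (v.take k) *
            (if v.drop k = [] then b i else zTimesOnePlus M i (v.drop k) * c i) := by
      intro k hk
      rw [List.take_succ_cons, List.drop_succ_cons,
        comp_semi b c M i v.length (v.drop k) (by simp)]
      congr 1
      simp [zTimesOnePlus, onePlus]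
    rw [Finset.sum_congr rfl hterm]
    rw [Finset.sum_range_succ]
    have hlast : v.take v.length = v := List.take_length
    have hlast2 : v.drop v.length = [] := List.drop_length
    rw [hlast, hlast2, if_pos rfl]
    -- RHS: expand the outer ncsMul and peel off m = 0
    conv_rhs => rw [show ncsMul (ncsMul (onePlus M) (ncsZ i)) (onePlus M) v
        = ∑ m ∈ Finset.range (v.length + 1),
            ncsMul (onePlus M) (ncsZ i) (v.take m) * onePlus M (v.drop m) from rfl]
    rw [Finset.sum_range_succ']
    simp only [List.take_zero, List.drop_zero, mul_z_nil, zero_mul, add_zero]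
    rw [Finset.mul_sum]
    have hcong : ∀ k ∈ Finset.range v.length,
        onePlus M (v.take k) *
            (if v.drop k = [] then b i else zTimesOnePlus M i (v.drop k) * c i)
        = c i * (ncsMul (onePlus M) (ncsZ i) (v.take (k + 1)) * onePlus M (v.drop (k + 1))) := by
      intro k hk
      simp only [Finset.mem_range] at hk
      have hne : v.drop k ≠ [] := by rw [ne_eq, List.drop_eq_nil_iff]; omega
      rw [if_neg hne]
      have hdrop : v.drop k = v[k] :: v.drop (k + 1) := List.drop_eq_getElem_cons hk
      have htake : v.take (k + 1) = v.take k ++ [v[k]] := by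
        rw [List.take_succ]
        simp [List.getElem?_eq_getElem hk]
      rw [hdrop, htake, mul_z_concat]
      simp only [zTimesOnePlus]
      by_cases h : v[k] = i
      · rw [if_pos h, if_pos h]
        show onePlus M (v.take k) * (onePlus M (v.drop (k+1)) * c i) = _
        ring
      · rw [if_neg h, if_neg h]; ring
    rw [Finset.sum_congr rfl hcong]
    ring
  · intro i' _ hne
    refine Finset.sum_eq_zero fun k _ => ?_
    rw [List.take_succ_cons]
    have : zTimesOnePlus M i' (i :: v.take k) = 0 := by
      simp [zTimesOnePlus, hne.symm]
    rw [this, zero_mul]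
  · intro h; simp at h
end Aux2

section Aux3
variable {n : ℕ}

lemma Rphi_cons (M : NCS n) (Rphi : NCS n)
    (hRphi : ∀ w : List (Fin n),
      Rphi w = ∑ j : Fin n, ncsMul (ncsMul (ncsZ j) (onePlus M)) (ncsZ j) w)
    (j : Fin n) (v : List (Fin n)) :
    Rphi (j :: v) = ncsMul (onePlus M) (ncsZ j) v := by
  rw [hRphi]
  rcases v.eq_nil_or_concat with rfl | ⟨u, l, rfl⟩
  · rw [mul_z_nil]
    refine Finset.sum_eq_zero fun j' _ => ?_
    rw [show ([j] : List (Fin n)) = [] ++ [j] from rfl, mul_z_concat]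
    by_cases h : j = j' <;> simp [h, z_mul_nil]
  · simp only [List.concat_eq_append]
    have hterm : ∀ j' ∈ (Finset.univ : Finset (Fin n)),
        ncsMul (ncsMul (ncsZ j') (onePlus M)) (ncsZ j') (j :: (u ++ [l]))
          = if l = j' then (if j = j' then onePlus M u else 0) else 0 := by
      intro j' _
      rw [show (j :: (u ++ [l])) = (j :: u) ++ [l] from rfl, mul_z_concat]
      by_cases h : l = j'
      · rw [if_pos h, if_pos h, z_mul_cons]
      · rw [if_neg h, if_neg h]
    rw [Finset.sum_congr rfl hterm, Finset.sum_ite_eq, mul_z_concat]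
    rcases eq_or_ne l j with rfl | h
    · simp
    · simp [h, Ne.symm h]

lemma GG (M : NCS n) (i j l : Fin n) (v : List (Fin n)) :
    ncsMul (ncsMul (onePlus M) (ncsZ i)) (ncsMul (onePlus M) (ncsZ j)) (v ++ [l])
      = if l = j then ncsMul (ncsMul (onePlus M) (ncsZ i)) (onePlus M) v else 0 := by
  have h0 : ncsMul (ncsMul (onePlus M) (ncsZ i)) (ncsMul (onePlus M) (ncsZ j)) (v ++ [l])
      = ∑ k ∈ Finset.range (v.length + 1 + 1),
          ncsMul (onePlus M) (ncsZ i) ((v ++ [l]).take k) *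
            ncsMul (onePlus M) (ncsZ j) ((v ++ [l]).drop k) := by
    show ∑ k ∈ Finset.range ((v ++ [l]).length + 1), _ = _
    rw [show (v ++ [l]).length = v.length + 1 by simp]
  rw [h0, Finset.sum_range_succ]
  rw [show (v ++ [l]).drop (v.length + 1) = [] from
    List.drop_eq_nil_of_le (by simp), mul_z_nil, mul_zero, add_zero]
  have hterm : ∀ k ∈ Finset.range (v.length + 1),
      ncsMul (onePlus M) (ncsZ i) ((v ++ [l]).take k) *
          ncsMul (onePlus M) (ncsZ j) ((v ++ [l]).drop k)
        = ncsMul (onePlus M) (ncsZ i) (v.take k) *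
            (if l = j then onePlus M (v.drop k) else 0) := by
    intro k hk
    simp only [Finset.mem_range] at hk
    rw [List.take_append_of_le_length (by omega),
      List.drop_append_of_le_length (by omega), mul_z_concat]
  rw [Finset.sum_congr rfl hterm]
  by_cases h : l = j
  · simp only [if_pos h]
    rfl
  · simp [if_neg h]

end Aux3


/-- let `M_ψ` be the moment generating function of the free semicircular
family `ψ`, i.e. `R_ψ(w(1+M_ψ(w))) = M_ψ(w)`, and set `R_φ(w) = Σⱼ wⱼ(1+M_ψ(w))wⱼ`.
Then `DᵢDⱼR_φ = δᵢⱼ + bᵢ DⱼR_φ + cᵢ DᵢR_φ DⱼR_φ`. -/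
theorem exponentiated_semicircular_is_Meixner (n : ℕ) (b c : Fin n → ℝ)
    (M : NCS n) (hM0 : M [] = 0)
    (hM : ncsComp (semicircularCumulants b c) (zTimesOnePlus M) = M)
    (Rphi : NCS n)
    (hRphi : ∀ w : List (Fin n),
      Rphi w = ∑ j : Fin n, ncsMul (ncsMul (ncsZ j) (onePlus M)) (ncsZ j) w) :
    ∀ (i j : Fin n) (w : List (Fin n)),
      Rphi (j :: i :: w)
        = (if i = j ∧ w = [] then (1 : ℝ) else 0)
          + b i * Rphi (j :: w)
          + c i * ncsMul (ncsD i Rphi) (ncsD j Rphi) w := by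
  intro i j w
  have hR : ∀ (j' : Fin n) (v : List (Fin n)),
      Rphi (j' :: v) = ncsMul (onePlus M) (ncsZ j') v := Rphi_cons M Rphi hRphi
  have hDi : ncsD i Rphi = ncsMul (onePlus M) (ncsZ i) := funext fun v => hR i v
  have hDj : ncsD j Rphi = ncsMul (onePlus M) (ncsZ j) := funext fun v => hR j v
  rw [hDi, hDj]
  rcases w.eq_nil_or_concat with rfl | ⟨v, l, rfl⟩
  · rw [hR j [i], hR j [], mul_z_nil,
      show ([i] : List (Fin n)) = [] ++ [i] from rfl, mul_z_concat]
    have h2 : ncsMul (ncsMul (onePlus M) (ncsZ i)) (ncsMul (onePlus M) (ncsZ j)) [] = 0 := by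
      show ∑ k ∈ Finset.range 1, _ = (0 : ℝ)
      simp [mul_z_nil]
    rw [h2]
    by_cases h : i = j <;> simp [h, onePlus, hM0]
  · simp only [List.concat_eq_append]
    rw [show (j :: i :: (v ++ [l])) = j :: ((i :: v) ++ [l]) from rfl,
      hR j ((i :: v) ++ [l]), mul_z_concat, hR j (v ++ [l]), mul_z_concat, GG]
    rw [if_neg (show ¬(i = j ∧ v ++ [l] = []) by simp)]
    by_cases h : l = j
    · rw [if_pos h, if_pos h, if_pos h]
      rw [show onePlus M (i :: v) = M (i :: v) by simp [onePlus],
        M_step b c M hM i v]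
      ring
    · rw [if_neg h, if_neg h, if_neg h]
      ring
end

section
/- Let R and M be non-commutative formal power series in z₁,…,zₙ with zero constant term related by R(w₁(1+M(w)),…,wₙ(1+M(w))) = M(w), i.e., R evaluated at the tuple with i-th entry wᵢ(1+M(w)) equals M(w). Then for each i, (1 + M(w)) · (D_{z_i}R)(w₁(1+M(w)),…,wₙ(1+M(w))) = D_{w_i} M(w). -/
/-- Fuel independence: `ncsCompAux` does not depend on the fuel as long as it is
at least the length of the word. -/
lemma ncsCompAux_fuel {n : ℕ} (V : Fin n → NCS n) :
    ∀ f1 f2 (R : NCS n) (w : List (Fin n)), w.length ≤ f1 → w.length ≤ f2 →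
      ncsCompAux V f1 R w = ncsCompAux V f2 R w := by
  intro f1
  induction f1 with
  | zero =>
    intro f2 R w h1 _
    have hw : w = [] := List.length_eq_zero_iff.mp (Nat.le_zero.mp h1)
    subst hw
    cases f2 <;> simp [ncsCompAux]
  | succ f ih =>
    intro f2 R w h1 h2
    rcases w with _ | ⟨a, t⟩
    · cases f2 <;> simp [ncsCompAux]
    · cases f2 with
      | zero => simp at h2
      | succ g =>
        simp only [ncsCompAux]
        rw [if_neg (by simp), if_neg (by simp)]
        refine Finset.sum_congr rfl fun j _ => Finset.sum_congr rfl fun k hk => ?_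
        simp only [Finset.mem_range, List.length_cons] at hk h1 h2
        congr 1
        apply ih
        · simp only [List.length_drop, List.length_cons]; omega
        · simp only [List.length_drop, List.length_cons]; omega

/-- if `R` and `M` are non-commutative power series with zero constant term
related by `R(w₁(1+M(w)),…,wₙ(1+M(w))) = M(w)`, then for each `i`,
`(1 + M(w)) · (DᵢR)(w₁(1+M(w)),…,wₙ(1+M(w))) = Dᵢ M(w)`. -/
theorem cumulant_moment_derivative (n : ℕ) (R M : NCS n)
    (hR0 : R [] = 0) (hM0 : M [] = 0)
    (hrel : ncsComp R (zTimesOnePlus M) = M) :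
    ∀ i : Fin n,
      ncsMul (onePlus M) (ncsComp (ncsD i R) (zTimesOnePlus M)) = ncsD i M := by
  intro i
  funext w
  have key : M (i :: w) =
      ∑ k ∈ Finset.range (w.length + 1),
        onePlus M (w.take k) *
          ncsCompAux (zTimesOnePlus M) w.length (fun v => R (i :: v)) (w.drop k) := by
    conv_lhs => rw [← hrel]
    show ncsCompAux (zTimesOnePlus M) (w.length + 1) R (i :: w) = _
    rw [ncsCompAux]
    beta_reduce
    rw [if_neg (List.cons_ne_nil _ _)]
    rw [Finset.sum_comm]
    apply Finset.sum_congr rfl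
    intro k hk
    have ht : (i :: w).take (k + 1) = i :: w.take k := rfl
    have hd : (i :: w).drop (k + 1) = w.drop k := rfl
    simp only [ht, hd, zTimesOnePlus]
    simp only [ite_mul, zero_mul, Finset.sum_ite_eq, Finset.mem_univ, if_pos]
    rfl
  show ncsMul (onePlus M) (ncsComp (ncsD i R) (zTimesOnePlus M)) w = M (i :: w)
  rw [key]
  unfold ncsMul ncsComp
  apply Finset.sum_congr rfl
  intro k hk
  congr 1
  apply ncsCompAux_fuel
  · exact le_rfl
  · simp only [List.length_drop]; omega
end

section
/- Suppose R is a non-commutative formal power series in z₁,…,zₙ with R = Σᵢ zᵢ² + higher-order terms satisfying the first-order diagonal system Dᵢ Dⱼ R = δᵢⱼ (1 + bᵢ Dᵢ R) for all i, j (in particular Dᵢ Dⱼ R = 0 for i ≠ j). Then R splits as a sum of single-variable series: R(z) = Σᵢ Rᵢ(zᵢ), where each Rᵢ is a formal power series in the single variable zᵢ satisfying Rᵢ(zᵢ)/zᵢ² = 1 + bᵢ Rᵢ(zᵢ)/zᵢ, i.e., Rᵢ(zᵢ) = zᵢ²/(1 - bᵢ zᵢ). -/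
/-- if `R = Σᵢ zᵢ² + h.o.t.` satisfies the first-order diagonal system
`DᵢDⱼR = δᵢⱼ(1 + bᵢ DᵢR)`, then `R` splits as a sum of single-variable series
`R(z) = Σᵢ Rᵢ(zᵢ)` (all coefficients of mixed monomials vanish) with
`Rᵢ(zᵢ) = zᵢ²/(1 - bᵢzᵢ)`, i.e. `R[xᵢ^{k+2}] = bᵢᵏ`. -/
theorem first_order_system_splits (n : ℕ) (R : NCS n) (b : Fin n → ℝ)
    (hR0 : R [] = 0) (hR1 : ∀ i : Fin n, R [i] = 0)
    (hR2 : ∀ i j : Fin n, R [i, j] = if i = j then 1 else 0)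
    (heq : ∀ (i j : Fin n) (w : List (Fin n)),
      R (j :: i :: w)
        = (if i = j then
            (if w = [] then (1 : ℝ) else 0) + b i * R (i :: w)
          else 0)) :
    (∀ (w : List (Fin n)) (i j : Fin n), i ∈ w → j ∈ w → i ≠ j → R w = 0)
    ∧ (∀ (i : Fin n) (k : ℕ), R (List.replicate (k + 2) i) = b i ^ k) := by
  constructor
  · intro w
    induction w with
    | nil => intro i j hi _ _; simp at hi
    | cons a s ih =>
      intro i j hi hj hij
      match s, ih with
      | [], _ =>
        simp only [List.mem_cons, List.not_mem_nil, or_false] at hi hj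
        exact absurd (hi.trans hj.symm) hij
      | c :: t, ih =>
        rw [heq c a t]
        by_cases hca : c = a
        · subst hca
          have hm : ∃ m ∈ t, m ≠ c := by
            rcases eq_or_ne i c with h | h
            · refine ⟨j, ?_, h ▸ hij.symm⟩
              have := hj
              simp only [List.mem_cons] at this
              rcases this with h1 | h1 | h1
              · exact absurd (h ▸ h1.symm) hij
              · exact absurd (h ▸ h1.symm) hij
              · exact h1
            · refine ⟨i, ?_, h⟩
              simp only [List.mem_cons] at hi
              rcases hi with h1 | h1 | h1
              · exact absurd h1 h
              · exact absurd h1 h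
              · exact h1
          obtain ⟨m, hmt, hmc⟩ := hm
          have ht : t ≠ [] := by rintro rfl; simp at hmt
          have hR : R (c :: t) = 0 :=
            ih c m List.mem_cons_self (List.mem_cons_of_mem _ hmt)
              (fun h => hmc h.symm)
          simp [ht, hR]
        · simp [hca]
  · intro i k
    induction k with
    | zero =>
      show R (i :: i :: []) = _
      rw [heq i i []]
      simp [hR1 i]
    | succ k ihk =>
      show R (i :: i :: List.replicate (k + 1) i) = _
      rw [heq i i (List.replicate (k + 1) i)]
      have h1 : List.replicate (k + 1) i ≠ [] := by simp
      have h2 : (i :: List.replicate (k + 1) i) = List.replicate (k + 2) i := rfl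
      simp [h1, h2, ihk, pow_succ]
      ring
end
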